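/- Let (G,·,D,⋆) be a probabilistic invariant metric group with ⋆ sup-continuous. Then the set Lip¹_⋆(G,Δ⁺) of probabilistic 1-Lipschitz maps is closed under sup-convolution ⊙ and (Lip¹_⋆(G,Δ⁺), ⊙) is a monoid with identity element δ_e. Moreover δ : G → Lip¹_⋆(G,Δ⁺), a ↦ δ_a, is an injective monoid (group) homomorphism. -/

import Mathlib

open Filter Topology Set

/-- A (real-domain representation of a) distribution function in Δ⁺ :
nondecreasing, with values in [0,1], left-continuous, vanishing on (-∞,0]. -/
def MemDP (f : ℝ → ℝ) : Prop :=
  Monotone f ∧ (∀ t, 0 ≤ f t) ∧ (∀ t, f t ≤ 1) ∧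
  (∀ t : ℝ, Tendsto f (nhdsWithin t (Set.Iio t)) (nhds (f t))) ∧
  (∀ t ≤ (0:ℝ), f t = 0)

/-- The distribution H₀. -/
noncomputable def H0 : ℝ → ℝ := fun t => if 0 < t then 1 else 0

/-- The distribution H_∞ (zero at every finite point). -/
def Hinf : ℝ → ℝ := fun _ => 0

/-- Pointwise order on distribution functions. -/
def dpLE (f g : ℝ → ℝ) : Prop := ∀ t, f t ≤ g t

/-- Triangle function on Δ⁺. -/
structure IsTriangle (star : (ℝ → ℝ) → (ℝ → ℝ) → (ℝ → ℝ)) : Prop where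
  mem : ∀ f g, MemDP f → MemDP g → MemDP (star f g)
  comm : ∀ f g, MemDP f → MemDP g → star f g = star g f
  assoc : ∀ f g h, MemDP f → MemDP g → MemDP h →
    star f (star g h) = star (star f g) h
  ident : ∀ f, MemDP f → star f H0 = f
  mono : ∀ f g h, MemDP f → MemDP g → MemDP h → dpLE f g → dpLE (star f h) (star g h)

/-- Sup-continuity of a triangle function (suprema in Δ⁺ are pointwise). -/
def SupCont (star : (ℝ → ℝ) → (ℝ → ℝ) → (ℝ → ℝ)) : Prop :=
  ∀ (I : Type) (_ : Nonempty I) (F : I → ℝ → ℝ) (L : ℝ → ℝ),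
    (∀ i, MemDP (F i)) → MemDP L →
    ∀ t, (⨆ i, star (F i) L t) = star (fun s => ⨆ i, F i s) L t

/-- Weak convergence in Δ⁺: pointwise convergence at each continuity point of the limit. -/
def WConv (Fn : ℕ → ℝ → ℝ) (F : ℝ → ℝ) : Prop :=
  ∀ t, ContinuousAt F t → Tendsto (fun n => Fn n t) atTop (nhds (F t))

/-- Continuity of a triangle function w.r.t. weak convergence. -/
def StarCont (star : (ℝ → ℝ) → (ℝ → ℝ) → (ℝ → ℝ)) : Prop :=
  ∀ (Fn Ln : ℕ → ℝ → ℝ) (F L : ℝ → ℝ),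
    (∀ n, MemDP (Fn n)) → (∀ n, MemDP (Ln n)) → MemDP F → MemDP L →
    WConv Fn F → WConv Ln L → WConv (fun n => star (Fn n) (Ln n)) (star F L)

/-- Probabilistic metric space (G, D, ⋆). -/
structure IsPMS {G : Type} (D : G → G → ℝ → ℝ)
    (star : (ℝ → ℝ) → (ℝ → ℝ) → (ℝ → ℝ)) : Prop where
  tri : IsTriangle star
  mem : ∀ p q, MemDP (D p q)
  eq_iff : ∀ p q, D p q = H0 ↔ p = q
  symm : ∀ p q, D p q = D q p
  triangle_ineq : ∀ p q r, dpLE (star (D p q) (D q r)) (D p r)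

/-- Probabilistic invariant metric group. -/
structure IsPIMG {G : Type} [Group G] (D : G → G → ℝ → ℝ)
    (star : (ℝ → ℝ) → (ℝ → ℝ) → (ℝ → ℝ)) extends IsPMS D star : Prop where
  invL : ∀ p q r : G, D (r * p) (r * q) = D p q
  invR : ∀ p q r : G, D (p * r) (q * r) = D p q

/-- Probabilistic 1-Lipschitz map. -/
def Lip1 {G : Type} (D : G → G → ℝ → ℝ) (star : (ℝ → ℝ) → (ℝ → ℝ) → (ℝ → ℝ))
    (f : G → ℝ → ℝ) : Prop :=
  (∀ x, MemDP (f x)) ∧ ∀ x y, dpLE (star (D x y) (f y)) (f x)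

/-- δ_a(y) = D(y,a). -/
def dlt {G : Type} (D : G → G → ℝ → ℝ) (a : G) : G → ℝ → ℝ := fun y => D y a

/-- Sup-convolution (f ⊙ g)(x) = sup_{yz = x} f(y) ⋆ g(z), pointwise. -/
noncomputable def sconv {G : Type} [Group G] (star : (ℝ → ℝ) → (ℝ → ℝ) → (ℝ → ℝ))
    (f g : G → ℝ → ℝ) : G → ℝ → ℝ :=
  fun x t => ⨆ y : G, star (f (x * y⁻¹)) (g y) t

/-- Cauchy sequence for a probabilistic metric: D(a_n, a_p) → H₀ weakly. -/
def PCauchy {G : Type} (D : G → G → ℝ → ℝ) (a : ℕ → G) : Prop :=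
  ∀ t > (0:ℝ), ∀ ε > (0:ℝ), ∃ N, ∀ n ≥ N, ∀ p ≥ N, 1 - ε ≤ D (a n) (a p) t

/-- Π(G): probabilistic 1-Lipschitz maps that are pointwise weak limits of δ_{a_n}
for some Cauchy sequence (a_n). -/
def InPi {G : Type} (D : G → G → ℝ → ℝ) (star : (ℝ → ℝ) → (ℝ → ℝ) → (ℝ → ℝ))
    (f : G → ℝ → ℝ) : Prop :=
  Lip1 D star f ∧ ∃ a : ℕ → G, PCauchy D a ∧ ∀ x, WConv (fun n => D (a n) x) (f x)

/-- 𝔻(f,g) = sup_{x∈G} f(x) ⋆ g(x), pointwise. -/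
noncomputable def DD {G : Type} (star : (ℝ → ℝ) → (ℝ → ℝ) → (ℝ → ℝ))
    (f g : G → ℝ → ℝ) : ℝ → ℝ :=
  fun t => ⨆ x : G, star (f x) (g x) t

/-- t-norm on [0,1]. -/
structure IsTnorm (T : ℝ → ℝ → ℝ) : Prop where
  mem : ∀ x ∈ Set.Icc (0:ℝ) 1, ∀ y ∈ Set.Icc (0:ℝ) 1, T x y ∈ Set.Icc (0:ℝ) 1
  comm : ∀ x y, T x y = T y x
  assoc : ∀ x y z, T x (T y z) = T (T x y) z
  mono : ∀ x y z, y ≤ z → T x y ≤ T x z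
  one : ∀ x ∈ Set.Icc (0:ℝ) 1, T x 1 = x

/-- Left-continuity of a t-norm (in each variable; by commutativity one suffices). -/
def LeftCtsTnorm (T : ℝ → ℝ → ℝ) : Prop :=
  ∀ y x : ℝ, Tendsto (fun s => T s y) (nhdsWithin x (Set.Iio x)) (nhds (T x y))

/-- The triangle function ⋆_T : (F ⋆_T L)(t) = sup_{s+u=t} T(F(s), L(u)). -/
noncomputable def starT (T : ℝ → ℝ → ℝ) (f g : ℝ → ℝ) : ℝ → ℝ :=
  fun t => ⨆ s : ℝ, T (f s) (g (t - s))

/-!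
Sup-continuity lets a supremum pass through `⋆` in either argument, so both bracketings of
`f ⊙ g ⊙ k` at `x` become one supremum over `G × G` of `f(a) ⋆ g(b) ⋆ k(c)` with `abc = x`.
Invariance of `D` turns `δ_e(y)` into `D(x, xy⁻¹)`, so the 1-Lipschitz property bounds every
term of `(f ⊙ δ_e)(x)` and `(δ_e ⊙ f)(x)` by `f(x)`, with equality at the term where the
`δ_e`-factor is `D(e,e) = H₀`, the unit of `⋆`; the same argument with the triangle inequality in
place of the Lipschitz bound gives `δ_a ⊙ δ_b = δ_{ab}`.
-/

namespace MemDP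

lemma bddAbove_range {ι : Type} {F : ι → ℝ → ℝ} (hF : ∀ i, MemDP (F i)) (t : ℝ) :
    BddAbove (range fun i => F i t) :=
  ⟨1, by rintro _ ⟨i, rfl⟩; exact (hF i).2.2.1 t⟩

lemma eq_sSup_image_Iio {f : ℝ → ℝ} (hf : MemDP f) (t : ℝ) :
    f t = sSup (f '' Iio t) := by
  have hb : BddAbove (f '' Iio t) := ⟨1, by rintro _ ⟨s, _, rfl⟩; exact hf.2.2.1 s⟩
  refine le_antisymm ?_ (csSup_le ⟨_, t - 1, sub_one_lt t, rfl⟩ ?_)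
  · refine le_of_tendsto (hf.2.2.2.1 t) ?_
    filter_upwards [self_mem_nhdsWithin] with s hs
    exact le_csSup hb ⟨s, hs, rfl⟩
  · rintro _ ⟨s, hs, rfl⟩
    exact hf.1 hs.le

lemma iSup {ι : Type} [Nonempty ι] {F : ι → ℝ → ℝ} (hF : ∀ i, MemDP (F i)) :
    MemDP (fun t => ⨆ i, F i t) := by
  have hb := bddAbove_range hF
  have hmono : Monotone (fun t => ⨆ i, F i t) :=
    fun s t hst => ciSup_mono (hb t) fun i => (hF i).1 hst
  refine ⟨hmono, fun t => ?_, fun t => ciSup_le fun i => (hF i).2.2.1 t, fun t => ?_,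
    fun t ht => by simp only [(hF _).2.2.2.2 t ht, ciSup_const]⟩
  · exact ((hF (Classical.arbitrary ι)).2.1 t).trans (le_ciSup (hb t) _)
  · -- a supremum of left-continuous nondecreasing functions is the supremum of its values on `Iio t`
    have hbIio : BddAbove ((fun s => ⨆ i, F i s) '' Iio t) :=
      ⟨1, by rintro _ ⟨s, _, rfl⟩; exact ciSup_le fun i => (hF i).2.2.1 s⟩
    have key : (⨆ i, F i t) = sSup ((fun s => ⨆ i, F i s) '' Iio t) := by
      refine le_antisymm (ciSup_le fun i => ?_) (csSup_le ⟨_, t - 1, sub_one_lt t, rfl⟩ ?_)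
      · rw [(hF i).eq_sSup_image_Iio t]
        refine csSup_le ⟨_, t - 1, sub_one_lt t, rfl⟩ ?_
        rintro _ ⟨s, hs, rfl⟩
        exact (le_ciSup (hb s) i).trans (le_csSup hbIio ⟨s, hs, rfl⟩)
      · rintro _ ⟨s, hs, rfl⟩
        exact hmono hs.le
    change Tendsto _ _ (𝓝 (⨆ i, F i t))
    rw [key]
    exact hmono.tendsto_nhdsLT t

end MemDP

lemma memDP_H0 : MemDP H0 := by
  have hmono : Monotone H0 := fun s t hst => by
    unfold H0; split_ifs <;> linarith
  refine ⟨hmono, fun t => ?_, fun t => ?_, fun t => ?_, fun t ht => if_neg ht.not_gt⟩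
  · unfold H0; split_ifs <;> norm_num
  · unfold H0; split_ifs <;> norm_num
  · rcases lt_or_ge 0 t with ht | ht
    · refine tendsto_const_nhds.congr' ?_
      filter_upwards [Ioo_mem_nhdsLT ht] with s hs
      simp only [H0, if_pos hs.1, if_pos ht]
    · refine tendsto_const_nhds.congr' ?_
      filter_upwards [self_mem_nhdsWithin] with s hs
      simp only [H0, if_neg (lt_of_lt_of_le hs ht).not_gt, if_neg ht.not_gt]

lemma IsTriangle.H0_star {star : (ℝ → ℝ) → (ℝ → ℝ) → (ℝ → ℝ)} (htri : IsTriangle star) {f : ℝ → ℝ} (hf : MemDP f) : star H0 f = f := by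
  rw [htri.comm _ _ memDP_H0 hf, htri.ident f hf]

lemma SupCont.star_iSup {star : (ℝ → ℝ) → (ℝ → ℝ) → (ℝ → ℝ)} (hsc : SupCont star)
    (htri : IsTriangle star) {I : Type} [Nonempty I] {F : I → ℝ → ℝ} {L : ℝ → ℝ}
    (hF : ∀ i, MemDP (F i)) (hL : MemDP L) (t : ℝ) :
    star L (fun s => ⨆ i, F i s) t = ⨆ i, star L (F i) t := by
  rw [htri.comm _ _ hL (MemDP.iSup hF), ← hsc I ‹_› F L hF hL t]
  exact iSup_congr fun i => by rw [htri.comm _ _ hL (hF i)]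

section SupConvolution

variable {G : Type} [Group G] {star : (ℝ → ℝ) → (ℝ → ℝ) → (ℝ → ℝ)}

lemma sconv_apply_eq_of_forall_le {f g : G → ℝ → ℝ} {x : G} {F : ℝ → ℝ}
    (hle : ∀ y, dpLE (star (f (x * y⁻¹)) (g y)) F) (y₀ : G)
    (heq : star (f (x * y₀⁻¹)) (g y₀) = F) : sconv star f g x = F := by
  funext t
  exact ciSup_eq_of_forall_le_of_forall_lt_exists_gt (fun y => hle y t)
    fun _ hw => ⟨y₀, by rwa [heq]⟩

lemma memDP_sconv (htri : IsTriangle star) {f g : G → ℝ → ℝ} (hf : ∀ x, MemDP (f x))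
    (hg : ∀ x, MemDP (g x)) (x : G) : MemDP (sconv star f g x) :=
  MemDP.iSup fun _ => htri.mem _ _ (hf _) (hg _)

lemma sconv_assoc (htri : IsTriangle star) (hsc : SupCont star) {f g k : G → ℝ → ℝ}
    (hf : ∀ x, MemDP (f x)) (hg : ∀ x, MemDP (g x)) (hk : ∀ x, MemDP (k x)) :
    sconv star (sconv star f g) k = sconv star f (sconv star g k) := by
  funext x t
  have hfgk : ∀ a b c, MemDP (star (star (f a) (g b)) (k c)) :=
    fun a b c => htri.mem _ _ (htri.mem _ _ (hf a) (hg b)) (hk c)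
  set A : G × G → ℝ := fun p => star (star (f (x * p.1⁻¹ * p.2⁻¹)) (g p.2)) (k p.1) t
  have hA : BddAbove (range A) := MemDP.bddAbove_range (fun p => hfgk _ _ _) t
  have hleft : sconv star (sconv star f g) k x t = ⨆ p, A p := by
    rw [ciSup_prod hA]
    exact iSup_congr fun y => (hsc G ⟨1⟩ _ _ (fun z => htri.mem _ _ (hf _) (hg _)) (hk y) t).symm
  -- the pair `(w, u)` on the right is the pair `(u, w * u⁻¹)` on the left
  have hright : sconv star f (sconv star g k) x t = ⨆ p : G × G, A (p.2, p.1 * p.2⁻¹) := by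
    rw [ciSup_prod (f := fun p : G × G => A (p.2, p.1 * p.2⁻¹))
      (hA.mono (range_comp_subset_range _ A))]
    refine iSup_congr fun w => ?_
    change star _ (fun s => ⨆ u, star (g (w * u⁻¹)) (k u) s) t = _
    rw [hsc.star_iSup htri (fun u => htri.mem _ _ (hg _) (hk _)) (hf _)]
    refine iSup_congr fun u => ?_
    rw [htri.assoc _ _ _ (hf _) (hg _) (hk _)]
    simp only [A, mul_inv_rev, inv_inv, mul_assoc, inv_mul_cancel_left]
  rw [hleft, hright]
  exact (Function.Surjective.iSup_comp (fun q => ⟨(q.2 * q.1, q.1), by simp⟩) A).symm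

end SupConvolution

section Lipschitz

variable {G : Type} {D : G → G → ℝ → ℝ} {star : (ℝ → ℝ) → (ℝ → ℝ) → (ℝ → ℝ)}

lemma IsPMS.dist_self (h : IsPMS D star) (a : G) : D a a = H0 :=
  (h.eq_iff a a).2 rfl

lemma IsPMS.lip1_dlt (h : IsPMS D star) (a : G) : Lip1 D star (dlt D a) :=
  ⟨fun x => h.mem x a, fun x y => h.triangle_ineq x y a⟩

lemma IsPMS.dlt_injective (h : IsPMS D star) : Function.Injective (dlt D) := fun a b hab =>
  (h.eq_iff a b).1 ((congrFun hab a).symm.trans (h.dist_self a))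

variable [Group G]

lemma Lip1.sconv (h : IsPIMG D star) (hsc : SupCont star) {f g : G → ℝ → ℝ}
    (hf : Lip1 D star f) (hg : Lip1 D star g) : Lip1 D star (sconv star f g) := by
  have hfg : ∀ x y, MemDP (star (f x) (g y)) := fun x y => h.tri.mem _ _ (hf.1 x) (hg.1 y)
  refine ⟨memDP_sconv h.tri hf.1 hg.1, fun x x' t => ?_⟩
  change star (D x x') (fun s => ⨆ y, star (f (x' * y⁻¹)) (g y) s) t ≤ _
  rw [hsc.star_iSup h.tri (fun y => hfg _ y) (h.mem x x')]
  refine ciSup_mono (MemDP.bddAbove_range (fun y => hfg _ y) t) fun y => ?_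
  rw [h.tri.assoc _ _ _ (h.mem x x') (hf.1 _) (hg.1 _)]
  refine h.tri.mono _ _ _ (h.tri.mem _ _ (h.mem _ _) (hf.1 _)) (hf.1 _) (hg.1 _) ?_ t
  rw [← h.invR x x' y⁻¹]
  exact hf.2 _ _

lemma sconv_dlt_one (h : IsPIMG D star) {f : G → ℝ → ℝ} (hf : Lip1 D star f) :
    sconv star f (dlt D 1) = f := by
  funext x
  refine sconv_apply_eq_of_forall_le (fun y => ?_) 1 ?_
  · have hdist : dlt D 1 y = D x (x * y⁻¹) := by
      rw [dlt, ← h.invL y 1 (x * y⁻¹), inv_mul_cancel_right, mul_one]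
    rw [hdist, h.tri.comm _ _ (hf.1 _) (h.mem _ _)]
    exact hf.2 _ _
  · rw [dlt, h.dist_self, inv_one, mul_one, h.tri.ident _ (hf.1 x)]

lemma dlt_one_sconv (h : IsPIMG D star) {f : G → ℝ → ℝ} (hf : Lip1 D star f) :
    sconv star (dlt D 1) f = f := by
  funext x
  refine sconv_apply_eq_of_forall_le (fun y => ?_) x ?_
  · have hdist : dlt D 1 (x * y⁻¹) = D x y := by
      rw [dlt, ← h.invR (x * y⁻¹) 1 y, inv_mul_cancel_right, one_mul]
    rw [hdist]
    exact hf.2 _ _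
  · rw [dlt, mul_inv_cancel, h.dist_self, h.tri.H0_star (hf.1 x)]

lemma dlt_sconv_dlt (h : IsPIMG D star) (a b : G) :
    sconv star (dlt D a) (dlt D b) = dlt D (a * b) := by
  funext x
  have hdist : ∀ y, dlt D b y = D (a * y) (a * b) := fun y => (h.invL y b a).symm
  refine sconv_apply_eq_of_forall_le (fun y => ?_) (a⁻¹ * x) ?_
  · have hdist' : dlt D a (x * y⁻¹) = D x (a * y) := by
      rw [dlt, ← h.invR (x * y⁻¹) a y, inv_mul_cancel_right]
    rw [hdist', hdist]
    exact h.triangle_ineq _ _ _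
  · rw [hdist, mul_inv_cancel_left, mul_inv_rev, inv_inv, mul_inv_cancel_left, dlt, h.dist_self,
      h.tri.H0_star (h.mem _ _)]
    rfl

end Lipschitz

/-- (Lip¹_⋆(G,Δ⁺), ⊙) is a monoid with identity δ_e and
δ : G → Lip¹_⋆(G,Δ⁺) is an injective homomorphism. -/
theorem stmt11 {G : Type} [Group G] (D : G → G → ℝ → ℝ)
    (star : (ℝ → ℝ) → (ℝ → ℝ) → (ℝ → ℝ)) (h : IsPIMG D star)
    (hsc : SupCont star) :
    (∀ f g, Lip1 D star f → Lip1 D star g → Lip1 D star (sconv star f g)) ∧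
    (∀ f g k, Lip1 D star f → Lip1 D star g → Lip1 D star k →
      sconv star (sconv star f g) k = sconv star f (sconv star g k)) ∧
    (∀ f, Lip1 D star f →
      sconv star f (dlt D 1) = f ∧ sconv star (dlt D 1) f = f) ∧
    (∀ a : G, Lip1 D star (dlt D a)) ∧
    Function.Injective (dlt D) ∧
    (∀ a b : G, sconv star (dlt D a) (dlt D b) = dlt D (a * b)) :=
  ⟨fun _ _ hf hg => hf.sconv h hsc hg,
    fun _ _ _ hf hg hk => sconv_assoc h.tri hsc hf.1 hg.1 hk.1,
    fun _ hf => ⟨sconv_dlt_one h hf, dlt_one_sconv h hf⟩,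
    h.lip1_dlt, h.dlt_injective, dlt_sconv_dlt h⟩
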